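/- arXiv:2212.03602 — 5 statements merged into one kernel-verified Lean document; each statement's English description precedes it below -/
import Mathlib

section
/- Let T_b > 0, T_l > 0 and t > T_l. Let ε : (0,∞) → (0,1) be strictly decreasing and satisfy the incremental-redundancy domination property: for every K ≥ 1 and all m_1, …, m_K > 0, ∏_{k=1}^{K} ε(m_k) ≥ ε(∑_{k=1}^{K} m_k), with equality only when K = 1. Then for every K ≥ 1 and all blocklengths m_1, …, m_K > 0 satisfying the time budget ∑_{k=1}^{K} (m_k·T_b + T_l) ≤ t, the overall success probability satisfies 1 − ∏_{k=1}^{K} ε(m_k) ≤ 1 − ε((t − T_l)/T_b), and equality holds if and only if K = 1 and m_1 = (t − T_l)/T_b. In other words, on the last hop the one-shot transmission using the entire remaining time is the unique optimal HARQ schedule (Lemma 2 of the paper). -/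
/-- Lemma 2 of the paper: on the last hop, with Type I HARQ without combining, whose error
function `ε` is strictly decreasing with values in `(0,1)` and satisfies the
incremental-redundancy domination property (`∏ ε (m k) ≥ ε (∑ m k)` with equality only for
`K = 1`), the one-shot transmission using the entire remaining time `t` is the unique optimal
schedule: any `K ≥ 1` attempts with blocklengths `m k > 0` fitting the time budget
`∑ (m k · T_b + T_l) ≤ t` satisfy
`1 − ∏ ε (m k) ≤ 1 − ε ((t − T_l)/T_b)`, with equality iff `K = 1` and `m 0 = (t − T_l)/T_b`. -/
theorem one_shot_optimal_on_last_hop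
    (Tb Tl t : ℝ) (hTb : 0 < Tb) (hTl : 0 < Tl) (ht : Tl < t)
    (ε : ℝ → ℝ)
    (hrange : ∀ m : ℝ, 0 < m → ε m ∈ Set.Ioo (0 : ℝ) 1)
    (hanti : StrictAntiOn ε (Set.Ioi 0))
    (hIR : ∀ K : ℕ, 1 ≤ K → ∀ m : ℕ → ℝ, (∀ k < K, 0 < m k) →
      ε (∑ k ∈ Finset.range K, m k) ≤ ∏ k ∈ Finset.range K, ε (m k) ∧
      ((∏ k ∈ Finset.range K, ε (m k)) = ε (∑ k ∈ Finset.range K, m k) → K = 1)) :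
    ∀ K : ℕ, 1 ≤ K → ∀ m : ℕ → ℝ, (∀ k < K, 0 < m k) →
      (∑ k ∈ Finset.range K, (m k * Tb + Tl)) ≤ t →
      (1 - ∏ k ∈ Finset.range K, ε (m k)) ≤ 1 - ε ((t - Tl) / Tb) ∧
      ((1 - ∏ k ∈ Finset.range K, ε (m k)) = 1 - ε ((t - Tl) / Tb) ↔
        K = 1 ∧ m 0 = (t - Tl) / Tb) := by
  intro K hK m hm hbudget
  set M := (t - Tl) / Tb with hM
  have hMpos : 0 < M := div_pos (by linarith) hTb
  set S := ∑ k ∈ Finset.range K, m k with hS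
  have hSpos : 0 < S := by
    apply Finset.sum_pos
    · intro k hk; exact hm k (Finset.mem_range.mp hk)
    · exact Finset.nonempty_range_iff.mpr (by omega)
  -- sum of budget
  have hsum : S * Tb + K * Tl ≤ t := by
    have : ∑ k ∈ Finset.range K, (m k * Tb + Tl) = S * Tb + K * Tl := by
      rw [Finset.sum_add_distrib, ← Finset.sum_mul, Finset.sum_const, Finset.card_range]
      push_cast; ring
    linarith [this ▸ hbudget]
  have hKTl : Tl ≤ (K : ℝ) * Tl := by
    have h1 : (1:ℝ) ≤ (K:ℝ) := by exact_mod_cast hK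
    nlinarith
  have hSM : S ≤ M := by
    rw [hM, le_div_iff₀ hTb]
    linarith
  have hεSM : ε M ≤ ε S := by
    rcases eq_or_lt_of_le hSM with h | h
    · rw [h]
    · exact le_of_lt (hanti hSpos (by exact hMpos) h)
  obtain ⟨hIR1, hIR2⟩ := hIR K hK m hm
  constructor
  · linarith
  constructor
  · intro heq
    have hprod : ∏ k ∈ Finset.range K, ε (m k) = ε M := by linarith
    have hps : ∏ k ∈ Finset.range K, ε (m k) = ε S := le_antisymm (hprod ▸ hεSM) hIR1
    have hK1 : K = 1 := hIR2 hps
    have hSM' : S = M := by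
      by_contra hne
      have hlt : S < M := lt_of_le_of_ne hSM hne
      have := hanti hSpos hMpos hlt
      rw [← hps, hprod] at this
      exact lt_irrefl _ this
    refine ⟨hK1, ?_⟩
    subst hK1
    simpa [hS, Finset.sum_range_one] using hSM'
  · rintro ⟨hK1, hm0⟩
    subst hK1
    simp [Finset.prod_range_one, hm0]
end

section
/- For capacity C > 0, payload d > 0, and channel dispersion V > 0, the finite-blocklength packet error rate ε(m) = Q(√(m/V)·(C − d/m)·ln 2) is a convex function of the blocklength m on the interval [d/C, ∞) (the region where ε(m) ≤ 1/2). -/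
/-- The standard Gaussian tail function `Q(x) = (1/√(2π)) ∫_x^∞ e^{−u²/2} du`. -/
noncomputable def gaussQ (x : ℝ) : ℝ :=
  (Real.sqrt (2 * Real.pi))⁻¹ * ∫ u in Set.Ioi x, Real.exp (-(u ^ 2) / 2)

open Set MeasureTheory

namespace FBLaux

noncomputable def gpdf (u : ℝ) : ℝ := Real.exp (-(u ^ 2) / 2)

lemma gpdf_cont : Continuous gpdf := by
  unfold gpdf; fun_prop

lemma gpdf_pos (u : ℝ) : 0 < gpdf u := Real.exp_pos _

lemma gpdf_integrable : Integrable gpdf := by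
  have h := integrable_exp_neg_mul_sq (b := (1:ℝ)/2) (by norm_num)
  have : gpdf = fun x : ℝ => Real.exp (-(1/2) * x ^ 2) := by
    funext u; unfold gpdf; congr 1; ring
  rw [this]; exact h

lemma gaussQ_hasDerivAt (x : ℝ) :
    HasDerivAt gaussQ (-((Real.sqrt (2 * Real.pi))⁻¹ * gpdf x)) x := by
  set c : ℝ := (Real.sqrt (2 * Real.pi))⁻¹ with hc
  have key : ∀ y : ℝ, gaussQ y =
      (c * (∫ u, gpdf u) - c * (∫ u in Iic (0:ℝ), gpdf u)) -
        c * ∫ u in (0:ℝ)..y, gpdf u := by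
    intro y
    have h1 : (∫ u in Iic y, gpdf u) + ∫ u in Ioi y, gpdf u = ∫ u, gpdf u :=
      intervalIntegral.integral_Iic_add_Ioi gpdf_integrable.integrableOn gpdf_integrable.integrableOn
    have h2 : (∫ u in Iic y, gpdf u) - ∫ u in Iic (0:ℝ), gpdf u =
        ∫ u in (0:ℝ)..y, gpdf u :=
      intervalIntegral.integral_Iic_sub_Iic gpdf_integrable.integrableOn
        gpdf_integrable.integrableOn
    show c * ∫ u in Ioi y, gpdf u = _
    linear_combination c * h1 - c * h2
  have hd : HasDerivAt (fun y : ℝ => ∫ u in (0:ℝ)..y, gpdf u) (gpdf x) x :=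
    intervalIntegral.integral_hasDerivAt_right
      gpdf_integrable.intervalIntegrable
      gpdf_cont.stronglyMeasurable.stronglyMeasurableAtFilter
      gpdf_cont.continuousAt
  have h := (hd.const_mul c).const_sub (c * (∫ u, gpdf u) - c * (∫ u in Iic (0:ℝ), gpdf u))
  have hfun : gaussQ = fun y : ℝ =>
      (c * (∫ u, gpdf u) - c * (∫ u in Iic (0:ℝ), gpdf u)) -
        c * ∫ u in (0:ℝ)..y, gpdf u := funext key
  rw [hfun]
  exact h

lemma gaussQ_deriv (x : ℝ) :
    deriv gaussQ x = -((Real.sqrt (2 * Real.pi))⁻¹ * gpdf x) :=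
  (gaussQ_hasDerivAt x).deriv

lemma c_pos : (0:ℝ) < (Real.sqrt (2 * Real.pi))⁻¹ := by
  have : (0:ℝ) < Real.sqrt (2 * Real.pi) :=
    Real.sqrt_pos.mpr (by positivity)
  positivity

lemma gaussQ_convexOn : ConvexOn ℝ (Ici (0:ℝ)) gaussQ := by
  apply MonotoneOn.convexOn_of_deriv (convex_Ici 0)
  · exact fun x _ => (gaussQ_hasDerivAt x).differentiableAt.continuousAt.continuousWithinAt
  · exact fun x _ => (gaussQ_hasDerivAt x).differentiableAt.differentiableWithinAt
  · intro x hx y hy hxy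
    rw [interior_Ici] at hx hy
    rw [gaussQ_deriv, gaussQ_deriv, neg_le_neg_iff]
    have hfy : gpdf y ≤ gpdf x := by
      unfold gpdf
      apply Real.exp_le_exp.mpr
      have : x ^ 2 ≤ y ^ 2 := by nlinarith [(mem_Ioi.mp hx).le, (mem_Ioi.mp hy).le]
      linarith
    exact mul_le_mul_of_nonneg_left hfy c_pos.le

lemma gaussQ_antitoneOn : AntitoneOn gaussQ (Ici (0:ℝ)) := by
  apply antitoneOn_of_deriv_nonpos (convex_Ici 0)
  · exact fun x _ => (gaussQ_hasDerivAt x).differentiableAt.continuousAt.continuousWithinAt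
  · exact fun x _ => (gaussQ_hasDerivAt x).differentiableAt.differentiableWithinAt
  · intro x _
    rw [gaussQ_deriv]
    have := mul_pos c_pos (gpdf_pos x)
    linarith

lemma h0_hasDerivAt (C d m : ℝ) (hm : 0 < m) :
    HasDerivAt (fun m : ℝ => C * Real.sqrt m - d / Real.sqrt m)
      (C / (2 * Real.sqrt m) + d / (2 * (m * Real.sqrt m))) m := by
  have hsm : 0 < Real.sqrt m := Real.sqrt_pos.mpr hm
  have hsq : HasDerivAt Real.sqrt (1 / (2 * Real.sqrt m)) m := Real.hasDerivAt_sqrt hm.ne'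
  have h2 : HasDerivAt (fun m : ℝ => (Real.sqrt m)⁻¹)
      (-(1 / (2 * Real.sqrt m)) / (Real.sqrt m) ^ 2) m := hsq.inv hsm.ne'
  have h := (hsq.const_mul C).sub (h2.const_mul d)
  have hfun : (fun m : ℝ => C * Real.sqrt m - d / Real.sqrt m)
      = fun m : ℝ => C * Real.sqrt m - d * (Real.sqrt m)⁻¹ := by
    funext x; rw [div_eq_mul_inv]
  rw [hfun]
  refine h.congr_deriv ?_
  have hms : Real.sqrt m * Real.sqrt m = m := Real.mul_self_sqrt hm.le
  field_simp
  ring_nf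
  rw [Real.sq_sqrt hm.le]
  ring

lemma h0_concaveOn (C d : ℝ) (hC : 0 < C) (hd : 0 < d) :
    ConcaveOn ℝ (Ici (d / C)) (fun m : ℝ => C * Real.sqrt m - d / Real.sqrt m) := by
  have hdc : 0 < d / C := div_pos hd hC
  apply AntitoneOn.concaveOn_of_deriv (convex_Ici _)
  · intro m hm
    exact (h0_hasDerivAt C d m (hdc.trans_le hm)).differentiableAt.continuousAt.continuousWithinAt
  · intro m hm
    rw [interior_Ici] at hm
    exact (h0_hasDerivAt C d m (hdc.trans hm)).differentiableAt.differentiableWithinAt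
  · intro x hx y hy hxy
    rw [interior_Ici] at hx hy
    have hx0 : 0 < x := hdc.trans hx
    have hy0 : 0 < y := hdc.trans hy
    have hsx : 0 < Real.sqrt x := Real.sqrt_pos.mpr hx0
    have hsy : 0 < Real.sqrt y := Real.sqrt_pos.mpr hy0
    rw [(h0_hasDerivAt C d x hx0).deriv, (h0_hasDerivAt C d y hy0).deriv]
    have hss : Real.sqrt x ≤ Real.sqrt y := Real.sqrt_le_sqrt hxy
    gcongr

end FBLaux

/-- For capacity `C > 0`, payload `d > 0`, and channel dispersion `V > 0`, the
finite-blocklength packet error rate `ε(m) = Q(√(m/V)·(C − d/m)·ln 2)` is a convex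
function of the blocklength `m` on the interval `[d/C, ∞)` (the region where
`ε(m) ≤ 1/2`). -/
theorem fbl_error_convex (C d V : ℝ) (hC : 0 < C) (hd : 0 < d) (hV : 0 < V) :
    ConvexOn ℝ (Set.Ici (d / C))
      (fun m : ℝ => gaussQ (Real.sqrt (m / V) * (C - d / m) * Real.log 2)) := by
  classical
  have hdc : 0 < d / C := div_pos hd hC
  set g : ℝ → ℝ := fun m => Real.sqrt (m / V) * (C - d / m) * Real.log 2 with hg
  have hsV : 0 < Real.sqrt V := Real.sqrt_pos.mpr hV
  have hk : 0 ≤ Real.log 2 / Real.sqrt V := by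
    have := Real.log_nonneg (by norm_num : (1:ℝ) ≤ 2)
    positivity
  have heq : Set.EqOn
      (fun m : ℝ => (Real.log 2 / Real.sqrt V) • (C * Real.sqrt m - d / Real.sqrt m)) g
      (Set.Ici (d / C)) := by
    intro m hm
    have hm0 : 0 < m := hdc.trans_le hm
    have hsm : 0 < Real.sqrt m := Real.sqrt_pos.mpr hm0
    have hms : Real.sqrt m * Real.sqrt m = m := Real.mul_self_sqrt hm0.le
    have hdiv : Real.sqrt (m / V) = Real.sqrt m / Real.sqrt V := Real.sqrt_div hm0.le V
    simp only [hg, smul_eq_mul, hdiv]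
    field_simp
    ring_nf
    linear_combination d * Real.sq_sqrt hm0.le
  have hconc : ConcaveOn ℝ (Set.Ici (d / C)) g :=
    (((FBLaux.h0_concaveOn C d hC hd).smul hk)).congr heq
  have hnonneg : ∀ m ∈ Set.Ici (d / C), 0 ≤ g m := by
    intro m hm
    have hm0 : 0 < m := hdc.trans_le hm
    have h1 : d / m ≤ C := by
      rw [div_le_iff₀ hm0]
      calc d = C * (d / C) := by field_simp
        _ ≤ C * m := by gcongr; exact hm
    have h2 : 0 ≤ C - d / m := by linarith
    have := Real.log_nonneg (by norm_num : (1:ℝ) ≤ 2)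
    have := Real.sqrt_nonneg (m / V)
    simp only [hg]
    positivity
  refine ⟨convex_Ici _, ?_⟩
  intro x hx y hy a b ha hb hab
  have hz : a • x + b • y ∈ Set.Ici (d / C) := (convex_Ici _) hx hy ha hb hab
  have hcomb : a * g x + b * g y ≤ g (a • x + b • y) := by
    simpa [smul_eq_mul] using hconc.2 hx hy ha hb hab
  have h0x := hnonneg x hx
  have h0y := hnonneg y hy
  have hcomb0 : 0 ≤ a * g x + b * g y := by positivity
  calc gaussQ (g (a • x + b • y)) ≤ gaussQ (a * g x + b * g y) :=
        FBLaux.gaussQ_antitoneOn (Set.mem_Ici.mpr hcomb0)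
          (Set.mem_Ici.mpr (hcomb0.trans hcomb)) hcomb
    _ ≤ a • gaussQ (g x) + b • gaussQ (g y) := by
        simpa [smul_eq_mul] using
          FBLaux.gaussQ_convexOn.2 (Set.mem_Ici.mpr h0x) (Set.mem_Ici.mpr h0y) ha hb hab
end

section
/- Let T be a schedule tree in which every internal node carries a weight ε_v ∈ (0, 1), and let v be an internal node of T at which the utility of the right subtree strictly exceeds that of the left subtree, ξ(R_v) > ξ(L_v). If T′ is obtained from T by replacing ε_v with any ε′_v < ε_v (all other labels unchanged), then the utility at the root strictly increases: ξ(T′) > ξ(T). (This is the strict-improvement step underlying the strict monotonicity part of Theorem 1: decreasing the error probability of a reachable transmission attempt whose success continuation is better than its failure continuation strictly increases the end-to-end reliability.) -/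
/-- A schedule tree: a finite binary tree whose leaves are labeled success (`true`, utility 1)
or failure (`false`, utility 0) and whose internal nodes carry an error probability. The left
child corresponds to failure of the transmission (probability `ε`) and the right child to
its success (probability `1 − ε`). -/
inductive ScheduleTree : Type
  | leaf : Bool → ScheduleTree
  | node : ℝ → ScheduleTree → ScheduleTree → ScheduleTree

namespace ScheduleTree

/-- The utility of a schedule tree: `ξ(leaf) =` its label, and
`ξ(node ε l r) = ε·ξ(l) + (1 − ε)·ξ(r)`. -/
noncomputable def utility : ScheduleTree → ℝ
  | leaf b => if b then 1 else 0
  | node e l r => e * utility l + (1 - e) * utility r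

/-- All internal-node weights of the tree lie in the set `S`. -/
def weightsIn (S : Set ℝ) : ScheduleTree → Prop
  | leaf _ => True
  | node e l r => e ∈ S ∧ weightsIn S l ∧ weightsIn S r

/-- The subtree of a tree at a given position, described by a path from the root
(`false` = go to the left child, `true` = go to the right child). -/
def subtreeAt : ScheduleTree → List Bool → Option ScheduleTree
  | t, [] => some t
  | leaf _, _ :: _ => none
  | node _ l r, b :: p => subtreeAt (if b then r else l) p

/-- Replace the weight of the internal node at position `p` by `e'`, leaving all other
labels unchanged (no change if `p` does not point to an internal node). -/
def replaceWeightAt : ScheduleTree → List Bool → ℝ → ScheduleTree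
  | leaf b, _, _ => leaf b
  | node _ l r, [], e' => node e' l r
  | node e l r, false :: p, e' => node e (replaceWeightAt l p e') r
  | node e l r, true :: p, e' => node e l (replaceWeightAt r p e')

end ScheduleTree

/-- Strict-improvement step underlying Theorem 1: in a schedule tree `T` whose internal-node
weights all lie in `(0, 1)`, if at an internal node (at position `p`, with weight `e`, left
subtree `l`, right subtree `r`) the utility of the right (success) subtree strictly exceeds
that of the left (failure) subtree, then replacing `e` by any `e' < e` strictly increases the
utility at the root. -/
theorem decrease_error_strictly_improves_utility
    (T : ScheduleTree) (hT : T.weightsIn (Set.Ioo 0 1))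
    (p : List Bool) (e : ℝ) (l r : ScheduleTree)
    (hsub : T.subtreeAt p = some (.node e l r))
    (hlr : l.utility < r.utility)
    (e' : ℝ) (he' : e' < e) :
    T.utility < (T.replaceWeightAt p e').utility := by
  induction T generalizing p with
  | leaf b => cases p <;> simp [ScheduleTree.subtreeAt] at hsub
  | node ε L R ihL ihR =>
    obtain ⟨hε, hL, hR⟩ := hT
    cases p with
    | nil =>
      simp [ScheduleTree.subtreeAt] at hsub
      obtain ⟨he, hl, hr⟩ := hsub
      subst he hl hr
      simp only [ScheduleTree.replaceWeightAt, ScheduleTree.utility]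
      nlinarith
    | cons b p' =>
      cases b with
      | false =>
        simp [ScheduleTree.subtreeAt] at hsub
        have := ihL hL p' hsub
        simp only [ScheduleTree.replaceWeightAt, ScheduleTree.utility]
        nlinarith [hε.1, hε.2]
      | true =>
        simp [ScheduleTree.subtreeAt] at hsub
        have := ihR hR p' hsub
        simp only [ScheduleTree.replaceWeightAt, ScheduleTree.utility]
        nlinarith [hε.1, hε.2]
end

section
/- Lemma 1 (history independence): With Type I HARQ without combining, where the per-attempt error probability of a blocklength-n transmission on the i-th last hop is ε_i(n), depending only on i and n and not on (k, τ), the supremal utility ξ_max(s) over all feasible blocklength policies from a state s = (t, i, k, τ) depends only on (t, i): for all k, k′, τ, τ′, ξ_max(t, i, k, τ) = ξ_max(t, i, k′, τ′). Moreover, restricting blocklengths to integers (so that the set of feasible policies is finite and the supremum is attained), there exists an optimal blocklength policy n_opt that is a function of (t, i) alone. -/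
/-- A DMH-HARQ system state `s = (t, i, k, τ)`: remaining time `t`, remaining hops `i`,
number `k` of failed HARQ attempts on the current hop, and accumulated time `τ` of these
failed attempts. -/
structure DMHState where
  t : ℝ
  i : ℕ
  k : ℕ
  τ : ℝ

namespace DMHHARQ

/-- `T_min^{(i)} = Σ_{j=1}^i (n_min,j·T_b + T_l)` (with `T_min^{(0)} = 0`): the minimal time
needed to forward the message over the last `i` hops. -/
noncomputable def Tmin (Tb Tl : ℝ) (nmin : ℕ → ℕ) (i : ℕ) : ℝ :=
  ∑ j ∈ Finset.Icc 1 i, ((nmin j : ℝ) * Tb + Tl)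

/-- Left (failure) child of state `s` when blocklength `n` is used: one more failed attempt
on the current hop. -/
def leftChild (Tb Tl n : ℝ) (s : DMHState) : DMHState :=
  ⟨s.t - n * Tb - Tl, s.i, s.k + 1, s.τ + n * Tb⟩

/-- Right (success) child of state `s` when blocklength `n` is used: proceed to the next hop. -/
def rightChild (Tb Tl n : ℝ) (s : DMHState) : DMHState :=
  ⟨s.t - n * Tb - Tl, s.i - 1, 0, 0⟩

/-- A blocklength policy is feasible if at every non-terminal state `s` (i.e. `1 ≤ i ≤ I` and
`t ≥ T_min^{(i)}`) it assigns a blocklength `n_s ∈ [n_min,i, (t − T_min^{(i−1)})/T_b]`. -/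
def Feasible (I : ℕ) (Tb Tl : ℝ) (nmin : ℕ → ℕ) (pol : DMHState → ℝ) : Prop :=
  ∀ s : DMHState, 1 ≤ s.i → s.i ≤ I → Tmin Tb Tl nmin s.i ≤ s.t →
    (nmin s.i : ℝ) ≤ pol s ∧ pol s ≤ (s.t - Tmin Tb Tl nmin (s.i - 1)) / Tb

/-- A policy takes only integer blocklengths. -/
def IntegerValued (pol : DMHState → ℝ) : Prop :=
  ∀ s : DMHState, ∃ n : ℕ, pol s = (n : ℝ)

/-- `PolicyUtility Tb Tl ε nmin pol s u` asserts that the schedule tree generated by policy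
`pol` from state `s` has utility `u`: a state with `i = 0` is a success leaf (utility 1); a
state with `i ≥ 1` and `t < T_min^{(i)}` is a failure leaf (utility 0); otherwise the
transmission of blocklength `pol s` on the `i`-th last hop fails with probability
`ε i (pol s)` (left child) and succeeds with probability `1 − ε i (pol s)` (right child),
and the utility is the corresponding convex combination. -/
inductive PolicyUtility (Tb Tl : ℝ) (ε : ℕ → ℝ → ℝ) (nmin : ℕ → ℕ)
    (pol : DMHState → ℝ) : DMHState → ℝ → Prop
  | success (s : DMHState) (h : s.i = 0) : PolicyUtility Tb Tl ε nmin pol s 1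
  | timeout (s : DMHState) (h1 : 1 ≤ s.i) (h2 : s.t < Tmin Tb Tl nmin s.i) :
      PolicyUtility Tb Tl ε nmin pol s 0
  | step (s : DMHState) (xl xr : ℝ) (h1 : 1 ≤ s.i) (h2 : Tmin Tb Tl nmin s.i ≤ s.t)
      (hl : PolicyUtility Tb Tl ε nmin pol (leftChild Tb Tl (pol s) s) xl)
      (hr : PolicyUtility Tb Tl ε nmin pol (rightChild Tb Tl (pol s) s) xr) :
      PolicyUtility Tb Tl ε nmin pol s (ε s.i (pol s) * xl + (1 - ε s.i (pol s)) * xr)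

end DMHHARQ

namespace DMHHARQ

section
variable (Tb Tl : ℝ) (ε : ℕ → ℝ → ℝ) (nmin : ℕ → ℕ)

lemma Tmin_succ (j : ℕ) :
    Tmin Tb Tl nmin (j+1) = Tmin Tb Tl nmin j + ((nmin (j+1) : ℝ) * Tb + Tl) :=
  Finset.sum_Icc_succ_top (Nat.one_le_iff_ne_zero.2 (Nat.succ_ne_zero j)) _

lemma Tl_le_Tmin (hTb : 0 ≤ Tb) (hTl : 0 ≤ Tl) (i : ℕ) (hi : 1 ≤ i) :
    Tl ≤ Tmin Tb Tl nmin i := by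
  induction i with
  | zero => omega
  | succ j ih =>
    rw [Tmin_succ]
    have h0 : (0:ℝ) ≤ (nmin (j+1) : ℝ) * Tb := by positivity
    rcases Nat.eq_zero_or_pos j with h | h
    · subst h
      have : Tmin Tb Tl nmin 0 = 0 := by simp [Tmin]
      rw [this]; linarith
    · have := ih h; linarith

lemma Tmin_mono_succ (hTb : 0 ≤ Tb) (hTl : 0 ≤ Tl) (j : ℕ) :
    Tmin Tb Tl nmin j ≤ Tmin Tb Tl nmin (j+1) := by
  rw [Tmin_succ]
  have h0 : (0:ℝ) ≤ (nmin (j+1) : ℝ) * Tb := by positivity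
  linarith

noncomputable def Sfin (t : ℝ) (i : ℕ) : Finset ℕ :=
  Finset.Icc (nmin i) ⌊(t - Tmin Tb Tl nmin (i-1)) / Tb⌋₊

lemma Sfin_nonempty (hTb : 0 < Tb) (hTl : 0 < Tl) {t : ℝ} {j : ℕ}
    (h : Tmin Tb Tl nmin (j+1) ≤ t) : (Sfin Tb Tl nmin t (j+1)).Nonempty := by
  refine ⟨nmin (j+1), Finset.mem_Icc.2 ⟨le_rfl, ?_⟩⟩
  have hs := Tmin_succ Tb Tl nmin j
  simp only [Sfin, Nat.add_sub_cancel]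
  apply Nat.le_floor
  rw [le_div_iff₀ hTb]
  nlinarith

noncomputable def Vaux : ℕ → ℝ → ℕ → ℝ
  | _, _, 0 => 1
  | 0, _, _+1 => 0
  | (N+1), t, (j+1) =>
    if h : Tmin Tb Tl nmin (j+1) ≤ t ∧ (Sfin Tb Tl nmin t (j+1)).Nonempty then
      (Sfin Tb Tl nmin t (j+1)).sup' h.2 (fun n =>
        ε (j+1) (n : ℝ) * Vaux N (t - (n:ℝ) * Tb - Tl) (j+1)
        + (1 - ε (j+1) (n:ℝ)) * Vaux N (t - (n:ℝ) * Tb - Tl) j)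
    else 0

lemma Vaux_zero_hop (N : ℕ) (t : ℝ) : Vaux Tb Tl ε nmin N t 0 = 1 := by
  cases N <;> rfl

lemma Vaux_fuel0 (t : ℝ) (j : ℕ) : Vaux Tb Tl ε nmin 0 t (j+1) = 0 := rfl

lemma Vaux_succ_def (N : ℕ) (t : ℝ) (j : ℕ) :
    Vaux Tb Tl ε nmin (N+1) t (j+1) =
    if h : Tmin Tb Tl nmin (j+1) ≤ t ∧ (Sfin Tb Tl nmin t (j+1)).Nonempty then
      (Sfin Tb Tl nmin t (j+1)).sup' h.2 (fun n =>
        ε (j+1) (n : ℝ) * Vaux Tb Tl ε nmin N (t - (n:ℝ) * Tb - Tl) (j+1)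
        + (1 - ε (j+1) (n:ℝ)) * Vaux Tb Tl ε nmin N (t - (n:ℝ) * Tb - Tl) j)
    else 0 := by
  rfl


lemma Vaux_succ_eq (hTb : 0 < Tb) (hTl : 0 < Tl) :
    ∀ (N : ℕ) (t : ℝ) (i : ℕ), t ≤ (N : ℝ) * Tl →
      Vaux Tb Tl ε nmin (N+1) t i = Vaux Tb Tl ε nmin N t i := by
  intro N
  induction N with
  | zero =>
    intro t i ht
    cases i with
    | zero => rfl
    | succ j =>
      rw [Vaux_succ_def, Vaux_fuel0, dif_neg]
      rintro ⟨h1, -⟩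
      have h2 := Tl_le_Tmin Tb Tl nmin hTb.le hTl.le (j+1) (by omega)
      simp only [Nat.cast_zero, zero_mul] at ht
      linarith
  | succ N ih =>
    intro t i ht
    cases i with
    | zero => rfl
    | succ j =>
      rw [Vaux_succ_def, Vaux_succ_def]
      by_cases h : Tmin Tb Tl nmin (j+1) ≤ t ∧ (Sfin Tb Tl nmin t (j+1)).Nonempty
      · rw [dif_pos h, dif_pos h]
        refine Finset.sup'_congr h.2 rfl (fun n _ => ?_)
        have hn' : t - (n:ℝ) * Tb - Tl ≤ (N : ℝ) * Tl := by
          have h0 : (0:ℝ) ≤ (n:ℝ) * Tb := by positivity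
          push_cast at ht
          nlinarith
        rw [ih _ _ hn', ih _ _ hn']
      · rw [dif_neg h, dif_neg h]

lemma Vaux_add (hTb : 0 < Tb) (hTl : 0 < Tl) (N d : ℕ) (t : ℝ) (i : ℕ)
    (h : t ≤ (N : ℝ) * Tl) :
    Vaux Tb Tl ε nmin (N + d) t i = Vaux Tb Tl ε nmin N t i := by
  induction d with
  | zero => rfl
  | succ d ih =>
    have h2 : t ≤ ((N + d : ℕ) : ℝ) * Tl := by
      refine le_trans h (mul_le_mul_of_nonneg_right ?_ hTl.le)
      exact_mod_cast Nat.le_add_right N d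
    calc Vaux Tb Tl ε nmin (N + (d+1)) t i
        = Vaux Tb Tl ε nmin ((N + d) + 1) t i := by ring_nf
      _ = Vaux Tb Tl ε nmin (N + d) t i := Vaux_succ_eq Tb Tl ε nmin hTb hTl _ t i h2
      _ = Vaux Tb Tl ε nmin N t i := ih

noncomputable def V (t : ℝ) (i : ℕ) : ℝ := Vaux Tb Tl ε nmin ⌈t / Tl⌉₊ t i

lemma le_fuel (hTl : 0 < Tl) (t : ℝ) : t ≤ (⌈t / Tl⌉₊ : ℝ) * Tl := by
  rcases le_total t 0 with h | h
  · have h2 : (0:ℝ) ≤ (⌈t / Tl⌉₊ : ℝ) * Tl := by positivity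
    linarith
  · have h2 := Nat.le_ceil (t / Tl)
    calc t = (t / Tl) * Tl := by field_simp
      _ ≤ _ := mul_le_mul_of_nonneg_right h2 hTl.le

lemma V_eq_Vaux (hTb : 0 < Tb) (hTl : 0 < Tl) (N : ℕ) (t : ℝ) (i : ℕ)
    (h : t ≤ (N : ℝ) * Tl) :
    V Tb Tl ε nmin t i = Vaux Tb Tl ε nmin N t i := by
  rcases le_total ⌈t / Tl⌉₊ N with hle | hle
  · obtain ⟨d, hd⟩ := Nat.exists_eq_add_of_le hle
    rw [V, hd]
    exact (Vaux_add Tb Tl ε nmin hTb hTl _ _ _ _ (le_fuel Tl hTl t)).symm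
  · obtain ⟨d, hd⟩ := Nat.exists_eq_add_of_le hle
    rw [V, hd]
    exact Vaux_add Tb Tl ε nmin hTb hTl _ _ _ _ h

lemma V_zero_hop (t : ℝ) : V Tb Tl ε nmin t 0 = 1 := Vaux_zero_hop Tb Tl ε nmin _ t

lemma V_timeout {t : ℝ} {i : ℕ} (h1 : 1 ≤ i) (h2 : t < Tmin Tb Tl nmin i) :
    V Tb Tl ε nmin t i = 0 := by
  obtain ⟨j, rfl⟩ : ∃ j, i = j + 1 := ⟨i - 1, by omega⟩
  rw [V]
  cases hN : ⌈t / Tl⌉₊ with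
  | zero => exact Vaux_fuel0 Tb Tl ε nmin t j
  | succ N =>
    rw [Vaux_succ_def, dif_neg]
    rintro ⟨hc, -⟩
    linarith

noncomputable def F (t : ℝ) (i : ℕ) (n : ℕ) : ℝ :=
  ε i (n:ℝ) * V Tb Tl ε nmin (t - (n:ℝ) * Tb - Tl) i
  + (1 - ε i (n:ℝ)) * V Tb Tl ε nmin (t - (n:ℝ) * Tb - Tl) (i-1)

lemma V_step (hTb : 0 < Tb) (hTl : 0 < Tl) {t : ℝ} {j : ℕ}
    (h : Tmin Tb Tl nmin (j+1) ≤ t) :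
    V Tb Tl ε nmin t (j+1)
      = (Sfin Tb Tl nmin t (j+1)).sup' (Sfin_nonempty Tb Tl nmin hTb hTl h)
          (F Tb Tl ε nmin t (j+1)) := by
  have hfuel := le_fuel Tl hTl t
  have hN : t ≤ ((⌈t/Tl⌉₊ + 1 : ℕ) : ℝ) * Tl := by
    push_cast
    nlinarith
  rw [V_eq_Vaux Tb Tl ε nmin hTb hTl _ _ _ hN, Vaux_succ_def,
    dif_pos ⟨h, Sfin_nonempty Tb Tl nmin hTb hTl h⟩]
  refine Finset.sup'_congr _ rfl (fun n _ => ?_)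
  have h0 : (0:ℝ) ≤ (n:ℝ) * Tb := by positivity
  have h' : t - (n:ℝ) * Tb - Tl ≤ (⌈t/Tl⌉₊ : ℝ) * Tl := by linarith
  rw [F, Nat.add_sub_cancel,
    V_eq_Vaux Tb Tl ε nmin hTb hTl ⌈t/Tl⌉₊ _ _ h',
    V_eq_Vaux Tb Tl ε nmin hTb hTl ⌈t/Tl⌉₊ _ _ h']

noncomputable def bestN (t : ℝ) (i : ℕ) : ℕ :=
  if h : (Sfin Tb Tl nmin t i).Nonempty then
    (Finset.exists_max_image (Sfin Tb Tl nmin t i) (F Tb Tl ε nmin t i) h).choose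
  else nmin i

lemma bestN_spec {t : ℝ} {i : ℕ} (h : (Sfin Tb Tl nmin t i).Nonempty) :
    bestN Tb Tl ε nmin t i ∈ Sfin Tb Tl nmin t i ∧
    ∀ n ∈ Sfin Tb Tl nmin t i,
      F Tb Tl ε nmin t i n ≤ F Tb Tl ε nmin t i (bestN Tb Tl ε nmin t i) := by
  rw [bestN, dif_pos h]
  obtain ⟨h1, h2⟩ := (Finset.exists_max_image (Sfin Tb Tl nmin t i)
    (F Tb Tl ε nmin t i) h).choose_spec
  exact ⟨h1, h2⟩

lemma V_eq_F_bestN (hTb : 0 < Tb) (hTl : 0 < Tl) {t : ℝ} {j : ℕ}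
    (h : Tmin Tb Tl nmin (j+1) ≤ t) :
    V Tb Tl ε nmin t (j+1) = F Tb Tl ε nmin t (j+1) (bestN Tb Tl ε nmin t (j+1)) := by
  have hne := Sfin_nonempty Tb Tl nmin hTb hTl h
  obtain ⟨hmem, hmax⟩ := bestN_spec Tb Tl ε nmin hne
  rw [V_step Tb Tl ε nmin hTb hTl h]
  exact le_antisymm (Finset.sup'_le _ _ hmax) (Finset.le_sup' _ hmem)

noncomputable def optPol (s : DMHState) : ℝ := (bestN Tb Tl ε nmin s.t s.i : ℝ)

lemma optPol_feasible (hTb : 0 < Tb) (hTl : 0 < Tl) (I : ℕ) :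
    Feasible I Tb Tl nmin (optPol Tb Tl ε nmin) := by
  intro s h1 _ h3
  obtain ⟨j, hj⟩ : ∃ j, s.i = j + 1 := ⟨s.i - 1, by omega⟩
  have hne : (Sfin Tb Tl nmin s.t s.i).Nonempty := by
    rw [hj]; exact Sfin_nonempty Tb Tl nmin hTb hTl (hj ▸ h3)
  obtain ⟨hmem, -⟩ := bestN_spec Tb Tl ε nmin hne
  rw [Sfin, Finset.mem_Icc] at hmem
  simp only [optPol]
  constructor
  · exact_mod_cast hmem.1
  · have hnn : 0 ≤ (s.t - Tmin Tb Tl nmin (s.i - 1)) / Tb := by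
      apply div_nonneg _ hTb.le
      have : Tmin Tb Tl nmin (s.i - 1) ≤ Tmin Tb Tl nmin s.i := by
        rw [hj]; simpa using Tmin_mono_succ Tb Tl nmin hTb.le hTl.le j
      linarith
    calc ((bestN Tb Tl ε nmin s.t s.i : ℕ) : ℝ)
        ≤ (⌊(s.t - Tmin Tb Tl nmin (s.i - 1)) / Tb⌋₊ : ℝ) := by
          exact_mod_cast hmem.2
      _ ≤ _ := Nat.floor_le hnn

lemma optPol_int : IntegerValued (optPol Tb Tl ε nmin) :=
  fun s => ⟨bestN Tb Tl ε nmin s.t s.i, rfl⟩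

lemma optPol_achieves (hTb : 0 < Tb) (hTl : 0 < Tl) :
    ∀ (N : ℕ) (s : DMHState), s.t ≤ (N : ℝ) * Tl →
      PolicyUtility Tb Tl ε nmin (optPol Tb Tl ε nmin) s (V Tb Tl ε nmin s.t s.i) := by
  intro N
  induction N with
  | zero =>
    rintro ⟨t, i, k, τ⟩ ht
    simp only [Nat.cast_zero, zero_mul] at ht
    cases i with
    | zero => rw [V_zero_hop]; exact .success _ rfl
    | succ j =>
      have h2 : t < Tmin Tb Tl nmin (j+1) := by
        have := Tl_le_Tmin Tb Tl nmin hTb.le hTl.le (j+1) (by omega)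
        linarith
      rw [V_timeout Tb Tl ε nmin (Nat.succ_le_succ (Nat.zero_le j)) h2]
      exact .timeout _ (Nat.succ_le_succ (Nat.zero_le j)) h2
  | succ N ih =>
    rintro ⟨t, i, k, τ⟩ ht
    cases i with
    | zero => rw [V_zero_hop]; exact .success _ rfl
    | succ j =>
      by_cases h : Tmin Tb Tl nmin (j+1) ≤ t
      · set b := bestN Tb Tl ε nmin t (j+1) with hb
        have hop : optPol Tb Tl ε nmin ⟨t, j+1, k, τ⟩ = (b : ℝ) := rfl
        have hchild : t - (b:ℝ) * Tb - Tl ≤ (N : ℝ) * Tl := by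
          have h0 : (0:ℝ) ≤ (b:ℝ) * Tb := by positivity
          push_cast at ht
          nlinarith
        have hl := ih ⟨t - (b:ℝ) * Tb - Tl, j+1, k+1, τ + (b:ℝ) * Tb⟩ hchild
        have hr := ih ⟨t - (b:ℝ) * Tb - Tl, j, 0, 0⟩ hchild
        have hres := PolicyUtility.step (Tb := Tb) (Tl := Tl) (ε := ε) (nmin := nmin)
          (pol := optPol Tb Tl ε nmin) ⟨t, j+1, k, τ⟩ _ _ (Nat.succ_le_succ (Nat.zero_le j)) h hl hr
        have hVF := V_eq_F_bestN Tb Tl ε nmin hTb hTl h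
        simp only [F, Nat.add_sub_cancel] at hVF
        show PolicyUtility Tb Tl ε nmin (optPol Tb Tl ε nmin) ⟨t, j+1, k, τ⟩
          (V Tb Tl ε nmin t (j+1))
        rw [hVF]
        exact hres
      · push_neg at h
        rw [V_timeout Tb Tl ε nmin (Nat.succ_le_succ (Nat.zero_le j)) h]
        exact .timeout _ (Nat.succ_le_succ (Nat.zero_le j)) h

lemma optPol_upper (hTb : 0 < Tb) (hTl : 0 < Tl) (I : ℕ)
    (hε : ∀ i, 1 ≤ i → i ≤ I → ∀ n : ℝ, 0 < n → ε i n ∈ Set.Ioo (0 : ℝ) 1)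
    (hnmin : ∀ i, 1 ≤ i → i ≤ I → 0 < nmin i)
    (pol' : DMHState → ℝ) (hfe : Feasible I Tb Tl nmin pol')
    (hint : IntegerValued pol') :
    ∀ (s : DMHState) (u : ℝ), PolicyUtility Tb Tl ε nmin pol' s u → s.i ≤ I →
      u ≤ V Tb Tl ε nmin s.t s.i := by
  intro s u hu
  induction hu with
  | success s h => intro _; rw [h, V_zero_hop]
  | timeout s h1 h2 => intro _; rw [V_timeout Tb Tl ε nmin h1 h2]
  | step s xl xr h1 h2 hl hr ihl ihr =>
    intro hsI
    obtain ⟨t, i, k, τ⟩ := s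
    simp only at h1 h2 hsI ihl ihr ⊢
    obtain ⟨j, rfl⟩ : ∃ j, i = j + 1 := ⟨i - 1, by omega⟩
    obtain ⟨m, hm⟩ := hint ⟨t, j+1, k, τ⟩
    obtain ⟨hlo, hhi⟩ := hfe ⟨t, j+1, k, τ⟩ h1 hsI h2
    have hm0 : (0:ℝ) < (nmin (j+1) : ℝ) := by
      exact_mod_cast hnmin (j+1) h1 hsI
    have hpos : 0 < pol' ⟨t, j+1, k, τ⟩ := lt_of_lt_of_le hm0 hlo
    have hεm := hε (j+1) h1 hsI _ hpos
    have hmmem : m ∈ Sfin Tb Tl nmin t (j+1) := by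
      rw [Sfin, Finset.mem_Icc, Nat.add_sub_cancel]
      constructor
      · have : (nmin (j+1) : ℝ) ≤ (m : ℝ) := hm ▸ hlo
        exact_mod_cast this
      · apply Nat.le_floor
        rw [← hm]
        simpa using hhi
    have hxl := ihl hsI
    have hxr := ihr (le_trans (Nat.sub_le _ _) hsI)
    rw [hm] at hxl hxr ⊢
    simp only [leftChild, rightChild, Nat.add_sub_cancel] at hxl hxr
    calc ε (j+1) (m:ℝ) * xl + (1 - ε (j+1) (m:ℝ)) * xr
        ≤ ε (j+1) (m:ℝ) * (V Tb Tl ε nmin (t - (m:ℝ)*Tb - Tl) (j+1))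
          + (1 - ε (j+1) (m:ℝ)) * (V Tb Tl ε nmin (t - (m:ℝ)*Tb - Tl) j) := by
          rw [hm] at hεm
          have := hεm.1
          have := hεm.2
          gcongr <;> linarith
      _ = F Tb Tl ε nmin t (j+1) m := by rw [F, Nat.add_sub_cancel]
      _ ≤ V Tb Tl ε nmin t (j+1) := by
          rw [V_step Tb Tl ε nmin hTb hTl h2]
          exact Finset.le_sup' _ hmmem

def σmap (i k k' : ℕ) (τ τ' : ℝ) (s : DMHState) : DMHState :=
  if s.i = i then ⟨s.t, s.i, k + (s.k - k'), τ + (s.τ - τ')⟩ else s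

lemma σmap_t (i k k' : ℕ) (τ τ' : ℝ) (s : DMHState) :
    (σmap i k k' τ τ' s).t = s.t := by
  rw [σmap]; split <;> rfl

lemma σmap_i (i k k' : ℕ) (τ τ' : ℝ) (s : DMHState) :
    (σmap i k k' τ τ' s).i = s.i := by
  rw [σmap]; split <;> rfl

lemma sim (Tb Tl : ℝ) (ε : ℕ → ℝ → ℝ) (nmin : ℕ → ℕ)
    (pol : DMHState → ℝ) (i k k' : ℕ) (τ τ' : ℝ) :
    ∀ {s₀ : DMHState} {u : ℝ}, PolicyUtility Tb Tl ε nmin pol s₀ u →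
    ∀ s : DMHState, σmap i k k' τ τ' s = s₀ → s.i ≤ i → (s.i = i → k' ≤ s.k) →
    PolicyUtility Tb Tl ε nmin (fun x => pol (σmap i k k' τ τ' x)) s u := by
  intro s₀ u h
  induction h with
  | success s₀ h0 =>
    intro s hs _ _
    exact .success s (by rw [← σmap_i i k k' τ τ' s, hs, h0])
  | timeout s₀ h1 h2 =>
    intro s hs _ _
    have hit : s.t = s₀.t := by rw [← hs, σmap_t]
    have hii : s.i = s₀.i := by rw [← hs, σmap_i]
    exact .timeout s (hii ▸ h1) (by rw [hit, hii]; exact h2)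
  | step s₀ xl xr h1 h2 hl hr ihl ihr =>
    rintro ⟨st, si, sk, sτ⟩ hs hsi hk
    have hit : st = s₀.t := by rw [← hs, σmap_t]
    have hii : si = s₀.i := by rw [← hs, σmap_i]
    have hpol : pol (σmap i k k' τ τ' ⟨st, si, sk, sτ⟩) = pol s₀ := by rw [hs]
    set n := pol s₀ with hn
    have hsi' : si ≤ i := hsi
    have h1' : 1 ≤ si := hii ▸ h1
    have hne : ¬ (si - 1 = i) := by omega
    have hL : σmap i k k' τ τ' (leftChild Tb Tl n ⟨st, si, sk, sτ⟩)
        = leftChild Tb Tl n s₀ := by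
      rw [← hs]
      show (if si = i then
              (⟨st - n * Tb - Tl, si, k + (sk + 1 - k'), τ + (sτ + n * Tb - τ')⟩ : DMHState)
            else ⟨st - n * Tb - Tl, si, sk + 1, sτ + n * Tb⟩)
          = leftChild Tb Tl n (if si = i then
              (⟨st, si, k + (sk - k'), τ + (sτ - τ')⟩ : DMHState) else ⟨st, si, sk, sτ⟩)
      by_cases hc : si = i
      · have hkk : k' ≤ sk := hk hc
        rw [if_pos hc, if_pos hc]
        simp only [leftChild, DMHState.mk.injEq, true_and, and_true]
        exact ⟨by omega, by ring⟩
      · rw [if_neg hc, if_neg hc]; rfl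
    have hR : σmap i k k' τ τ' (rightChild Tb Tl n ⟨st, si, sk, sτ⟩)
        = rightChild Tb Tl n s₀ := by
      rw [← hs]
      show (if si - 1 = i then
              (⟨st - n * Tb - Tl, si - 1, k + (0 - k'), τ + (0 - τ')⟩ : DMHState)
            else ⟨st - n * Tb - Tl, si - 1, 0, 0⟩)
          = rightChild Tb Tl n (if si = i then
              (⟨st, si, k + (sk - k'), τ + (sτ - τ')⟩ : DMHState) else ⟨st, si, sk, sτ⟩)
      rw [if_neg hne]
      by_cases hc : si = i
      · rw [if_pos hc]; rfl
      · rw [if_neg hc]; rfl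
    have hxl := ihl (leftChild Tb Tl n ⟨st, si, sk, sτ⟩) hL
      (show si ≤ i from hsi')
      (fun hh => show k' ≤ sk + 1 from le_trans (hk hh) (Nat.le_succ sk))
    have hxr := ihr (rightChild Tb Tl n ⟨st, si, sk, sτ⟩) hR
      (show si - 1 ≤ i from le_trans (Nat.sub_le si 1) hsi')
      (fun hh => absurd (show si - 1 = i from hh) hne)
    have hgoal : ε s₀.i (pol s₀) * xl + (1 - ε s₀.i (pol s₀)) * xr
        = ε si ((fun x => pol (σmap i k k' τ τ' x)) ⟨st, si, sk, sτ⟩) * xl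
          + (1 - ε si ((fun x => pol (σmap i k k' τ τ' x)) ⟨st, si, sk, sτ⟩)) * xr := by
      simp only [hpol, ← hii, ← hn]
    rw [hgoal]
    refine PolicyUtility.step ⟨st, si, sk, sτ⟩ xl xr (show 1 ≤ si from h1')
      (show Tmin Tb Tl nmin si ≤ st by rw [hit, hii]; exact h2) ?_ ?_
    · show PolicyUtility Tb Tl ε nmin _
        (leftChild Tb Tl (pol (σmap i k k' τ τ' ⟨st, si, sk, sτ⟩)) _) xl
      rw [hpol]
      exact hxl
    · show PolicyUtility Tb Tl ε nmin _
        (rightChild Tb Tl (pol (σmap i k k' τ τ' ⟨st, si, sk, sτ⟩)) _) xr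
      rw [hpol]
      exact hxr

end

lemma feasible_comp (I : ℕ) (Tb Tl : ℝ) (nmin : ℕ → ℕ) (pol : DMHState → ℝ)
    (i k k' : ℕ) (τ τ' : ℝ) (hfe : Feasible I Tb Tl nmin pol) :
    Feasible I Tb Tl nmin (fun s => pol (σmap i k k' τ τ' s)) := by
  intro s h1 h2 h3
  have h := hfe (σmap i k k' τ τ' s) (by rw [σmap_i]; exact h1)
    (by rw [σmap_i]; exact h2) (by rw [σmap_i, σmap_t]; exact h3)
  rw [σmap_i, σmap_t] at h
  exact h

lemma σmap_root (i k k' : ℕ) (τ τ' : ℝ) (t : ℝ) :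
    σmap i k k' τ τ' ⟨t, i, k', τ'⟩ = ⟨t, i, k, τ⟩ := by
  show (if i = i then (⟨t, i, k + (k' - k'), τ + (τ' - τ')⟩ : DMHState) else ⟨t, i, k', τ'⟩)
      = (⟨t, i, k, τ⟩ : DMHState)
  rw [if_pos rfl]
  simp

lemma transfer (I : ℕ) (Tb Tl : ℝ) (ε : ℕ → ℝ → ℝ) (nmin : ℕ → ℕ)
    (t : ℝ) (i k k' : ℕ) (τ τ' : ℝ) (u : ℝ) (pol : DMHState → ℝ)
    (hfe : Feasible I Tb Tl nmin pol)
    (h : PolicyUtility Tb Tl ε nmin pol ⟨t, i, k, τ⟩ u) :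
    ∃ pol₂ : DMHState → ℝ, Feasible I Tb Tl nmin pol₂ ∧
      PolicyUtility Tb Tl ε nmin pol₂ ⟨t, i, k', τ'⟩ u :=
  ⟨fun s => pol (σmap i k k' τ τ' s),
    feasible_comp I Tb Tl nmin pol i k k' τ τ' hfe,
    sim Tb Tl ε nmin pol i k k' τ τ' h ⟨t, i, k', τ'⟩ (σmap_root i k k' τ τ' t)
      le_rfl (fun _ => le_rfl)⟩

end DMHHARQ


open DMHHARQ

/-- Lemma 1 (history independence): with Type I HARQ without combining, where the per-attempt
error probability `ε i n` of a blocklength-`n` transmission on the `i`-th last hop depends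
only on `i` and `n` and not on `(k, τ)`, the supremal utility `ξ_max(s)` over all feasible
blocklength policies from a state `s = (t, i, k, τ)` depends only on `(t, i)`. Moreover,
restricting blocklengths to integers (so that the supremum is attained), there exists an
optimal blocklength policy that is a function of `(t, i)` alone. -/
theorem history_independence
    (I : ℕ) (hI : 1 ≤ I) (Tb Tl : ℝ) (hTb : 0 < Tb) (hTl : 0 < Tl)
    (ε : ℕ → ℝ → ℝ)
    (hε : ∀ i, 1 ≤ i → i ≤ I → ∀ n : ℝ, 0 < n → ε i n ∈ Set.Ioo (0 : ℝ) 1)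
    (nmin : ℕ → ℕ) (hnmin : ∀ i, 1 ≤ i → i ≤ I → 0 < nmin i) :
    -- ξ_max(t, i, k, τ) = ξ_max(t, i, k', τ') for all histories (k, τ), (k', τ'):
    (∀ (t : ℝ) (i : ℕ), i ≤ I → ∀ (k k' : ℕ) (τ τ' : ℝ),
      sSup {u : ℝ | ∃ pol : DMHState → ℝ, Feasible I Tb Tl nmin pol ∧
          PolicyUtility Tb Tl ε nmin pol ⟨t, i, k, τ⟩ u}
        = sSup {u : ℝ | ∃ pol : DMHState → ℝ, Feasible I Tb Tl nmin pol ∧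
          PolicyUtility Tb Tl ε nmin pol ⟨t, i, k', τ'⟩ u}) ∧
    -- with integer blocklengths, an optimal policy exists and depends only on (t, i):
    (∃ pol : DMHState → ℝ, Feasible I Tb Tl nmin pol ∧ IntegerValued pol ∧
      (∀ s s' : DMHState, s.t = s'.t → s.i = s'.i → pol s = pol s') ∧
      ∀ s : DMHState, s.i ≤ I → ∃ u : ℝ, PolicyUtility Tb Tl ε nmin pol s u ∧
        IsGreatest {u' : ℝ | ∃ pol' : DMHState → ℝ, Feasible I Tb Tl nmin pol' ∧
          IntegerValued pol' ∧ PolicyUtility Tb Tl ε nmin pol' s u'} u) := by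
  
  constructor
  · intro t i hiI k k' τ τ'
    congr 1
    ext u
    simp only [Set.mem_setOf_eq]
    constructor
    · rintro ⟨pol, hfe, hu⟩
      exact transfer I Tb Tl ε nmin t i k k' τ τ' u pol hfe hu
    · rintro ⟨pol, hfe, hu⟩
      exact transfer I Tb Tl ε nmin t i k' k τ' τ u pol hfe hu
  · refine ⟨optPol Tb Tl ε nmin, optPol_feasible Tb Tl ε nmin hTb hTl I,
      optPol_int Tb Tl ε nmin, ?_, ?_⟩
    · intro s s' h1 h2
      simp only [optPol, h1, h2]
    · intro s hsI
      refine ⟨V Tb Tl ε nmin s.t s.i, ?_, ?_, ?_⟩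
      · exact optPol_achieves Tb Tl ε nmin hTb hTl ⌈s.t / Tl⌉₊ s (le_fuel Tl hTl s.t)
      · exact ⟨optPol Tb Tl ε nmin, optPol_feasible Tb Tl ε nmin hTb hTl I,
          optPol_int Tb Tl ε nmin,
          optPol_achieves Tb Tl ε nmin hTb hTl ⌈s.t / Tl⌉₊ s (le_fuel Tl hTl s.t)⟩
      · rintro u' ⟨pol', hfe', hint', hu'⟩
        exact optPol_upper Tb Tl ε nmin hTb hTl I hε hnmin pol' hfe' hint' s u' hu' hsI
end

section
/- Optimal dynamic scheduling dominates every static schedule: for any blocklengths n_1, …, n_I with n_i ≥ n_min,i for each i and total time budget ∑_{i=1}^{I} (n_i·T_b + T_l) ≤ T_max, the optimal DMH-HARQ value satisfies ξ_max(T_max, I) ≥ ∏_{i=1}^{I} (1 − ε_i(n_i)), i.e., the maximal end-to-end success probability of the dynamic scheme is at least the end-to-end success probability of the static schedule that transmits once on each hop i with blocklength n_i. -/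
/-- Optimal dynamic scheduling dominates every static schedule. Let `Ξ` be the value
function of the DMH-HARQ dynamic program (with per-transmission error functions
`ε i : (0,∞) → (0,1)` for the `i`-th last hop, minimal blocklengths `n_min,i > 0`, and
`T_min^{(i)} = Σ_{j=1}^i (n_min,j·T_b + T_l)`), i.e. `Ξ t 0 = 1`, `Ξ t i = 0` for
`t < T_min^{(i)}`, and otherwise `Ξ t i = sup` over real blocklengths
`n ∈ [n_min,i, (t − T_min^{(i−1)})/T_b]` of
`ε i n · Ξ (t − n·T_b − T_l) i + (1 − ε i n) · Ξ (t − n·T_b − T_l) (i−1)`. Then for any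
static blocklengths `n_1, …, n_I` with `n_i ≥ n_min,i` and total time budget
`∑_{i=1}^I (n_i·T_b + T_l) ≤ T_max`, the optimal DMH-HARQ value satisfies
`Ξ T_max I ≥ ∏_{i=1}^I (1 − ε i (n_i))`, the end-to-end success probability of the static
schedule that transmits once on each hop `i` with blocklength `n_i`. -/
theorem dynamic_dominates_static
    (I : ℕ) (hI : 1 ≤ I) (Tb Tl : ℝ) (hTb : 0 < Tb) (hTl : 0 < Tl)
    (ε : ℕ → ℝ → ℝ)
    (hrange : ∀ j, 1 ≤ j → j ≤ I → ∀ m : ℝ, 0 < m → ε j m ∈ Set.Ioo (0 : ℝ) 1)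
    (nmin : ℕ → ℝ) (hnmin : ∀ i, 1 ≤ i → i ≤ I → 0 < nmin i)
    (Tmin : ℕ → ℝ)
    (hTminDef : ∀ i, Tmin i = ∑ j ∈ Finset.Icc 1 i, (nmin j * Tb + Tl))
    (Ξ : ℝ → ℕ → ℝ)
    (hΞ0 : ∀ t : ℝ, Ξ t 0 = 1)
    (hΞfail : ∀ (t : ℝ) (i : ℕ), 1 ≤ i → i ≤ I → t < Tmin i → Ξ t i = 0)
    (hΞrec : ∀ (t : ℝ) (i : ℕ), 1 ≤ i → i ≤ I → Tmin i ≤ t →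
      Ξ t i = sSup {x : ℝ | ∃ n : ℝ, nmin i ≤ n ∧ n ≤ (t - Tmin (i - 1)) / Tb ∧
        x = ε i n * Ξ (t - n * Tb - Tl) i + (1 - ε i n) * Ξ (t - n * Tb - Tl) (i - 1)})
    (Tmax : ℝ) (n : ℕ → ℝ)
    (hn : ∀ i, 1 ≤ i → i ≤ I → nmin i ≤ n i)
    (hbudget : (∑ i ∈ Finset.Icc 1 I, (n i * Tb + Tl)) ≤ Tmax) :
    ∏ i ∈ Finset.Icc 1 I, (1 - ε i (n i)) ≤ Ξ Tmax I := by
  -- Bounds: 0 ≤ Ξ t i ≤ 1 for i ≤ I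
  have hA : ∀ i, i ≤ I → ∀ t : ℝ, 0 ≤ Ξ t i ∧ Ξ t i ≤ 1 := by
    intro i
    induction i with
    | zero => intro _ t; rw [hΞ0]; exact ⟨zero_le_one, le_refl 1⟩
    | succ i ih =>
      intro hiI
      have hi1 : 1 ≤ i + 1 := Nat.le_add_left 1 i
      have hiI' : i ≤ I := Nat.le_of_succ_le hiI
      have hnm : 0 < nmin (i + 1) := hnmin (i + 1) hi1 hiI
      set δ : ℝ := nmin (i + 1) * Tb + Tl with hδ
      have hδpos : 0 < δ := by positivity
      have key : ∀ N : ℕ, ∀ s : ℝ, s < Tmin (i + 1) + N * δ →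
          0 ≤ Ξ s (i + 1) ∧ Ξ s (i + 1) ≤ 1 := by
        intro N
        induction N with
        | zero =>
          intro s hs
          rw [hΞfail s (i + 1) hi1 hiI (by simpa using hs)]
          exact ⟨le_refl 0, zero_le_one⟩
        | succ N ihN =>
          intro s hs
          by_cases hfail : s < Tmin (i + 1)
          · rw [hΞfail s (i + 1) hi1 hiI hfail]; exact ⟨le_refl 0, zero_le_one⟩
          · push_neg at hfail
            rw [hΞrec s (i + 1) hi1 hiI hfail]
            have helem : ∀ x ∈ {x : ℝ | ∃ m : ℝ, nmin (i + 1) ≤ m ∧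
                m ≤ (s - Tmin (i + 1 - 1)) / Tb ∧
                x = ε (i + 1) m * Ξ (s - m * Tb - Tl) (i + 1) +
                  (1 - ε (i + 1) m) * Ξ (s - m * Tb - Tl) (i + 1 - 1)},
                0 ≤ x ∧ x ≤ 1 := by
              rintro x ⟨m, hm1, hm2, rfl⟩
              have hmpos : 0 < m := lt_of_lt_of_le hnm hm1
              have hε := hrange (i + 1) hi1 hiI m hmpos
              have hs' : s - m * Tb - Tl < Tmin (i + 1) + N * δ := by
                have : δ ≤ m * Tb + Tl := by
                  have := mul_le_mul_of_nonneg_right hm1 hTb.le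
                  simp [hδ]; linarith
                push_cast at hs ⊢
                nlinarith
              have h1 := ihN (s - m * Tb - Tl) hs'
              have h2 := ih hiI' (s - m * Tb - Tl)
              simp only [Nat.add_sub_cancel]
              constructor
              · have := hε.1.le
                have := hε.2.le
                nlinarith [h1.1, h2.1]
              · nlinarith [h1.2, h2.2, hε.1.le, hε.2.le, h1.1, h2.1]
            constructor
            · exact Real.sSup_nonneg (fun x hx => (helem x hx).1)
            · exact Real.sSup_le (fun x hx => (helem x hx).2) zero_le_one
      intro t
      obtain ⟨N, hN⟩ := exists_nat_gt ((t - Tmin (i + 1)) / δ)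
      have : t < Tmin (i + 1) + N * δ := by
        rw [div_lt_iff₀ hδpos] at hN; linarith
      exact key N t this
  -- Tmin k ≤ static budget of first k hops
  have hTm : ∀ k, k ≤ I → Tmin k ≤ ∑ j ∈ Finset.Icc 1 k, (n j * Tb + Tl) := by
    intro k hk
    rw [hTminDef]
    apply Finset.sum_le_sum
    intro j hj
    simp only [Finset.mem_Icc] at hj
    have := hn j hj.1 (le_trans hj.2 hk)
    nlinarith [hnmin j hj.1 (le_trans hj.2 hk)]
  -- main induction
  have hB : ∀ i, i ≤ I → ∀ t : ℝ, (∑ j ∈ Finset.Icc 1 i, (n j * Tb + Tl)) ≤ t →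
      ∏ j ∈ Finset.Icc 1 i, (1 - ε j (n j)) ≤ Ξ t i := by
    intro i
    induction i with
    | zero => intro _ t _; simp [hΞ0]
    | succ i ih =>
      intro hiI t ht
      have hi1 : 1 ≤ i + 1 := Nat.le_add_left 1 i
      have hiI' : i ≤ I := Nat.le_of_succ_le hiI
      have hnm : 0 < nmin (i + 1) := hnmin (i + 1) hi1 hiI
      have hni : nmin (i + 1) ≤ n (i + 1) := hn (i + 1) hi1 hiI
      have hsplit : (∑ j ∈ Finset.Icc 1 (i + 1), (n j * Tb + Tl)) =
          (∑ j ∈ Finset.Icc 1 i, (n j * Tb + Tl)) + (n (i + 1) * Tb + Tl) :=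
        Finset.sum_Icc_succ_top (Nat.le_add_left 1 i) _
      have hpsplit : (∏ j ∈ Finset.Icc 1 (i + 1), (1 - ε j (n j))) =
          (∏ j ∈ Finset.Icc 1 i, (1 - ε j (n j))) * (1 - ε (i + 1) (n (i + 1))) :=
        Finset.prod_Icc_succ_top (Nat.le_add_left 1 i) _
      have hTmt : Tmin (i + 1) ≤ t := le_trans (hTm (i + 1) hiI) ht
      rw [hΞrec t (i + 1) hi1 hiI hTmt]
      set t' : ℝ := t - n (i + 1) * Tb - Tl with ht'
      have ht'ge : (∑ j ∈ Finset.Icc 1 i, (n j * Tb + Tl)) ≤ t' := by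
        rw [hsplit] at ht; simp [ht']; linarith
      have hTmi : Tmin i ≤ t' := le_trans (hTm i hiI') ht'ge
      have hmem : ε (i + 1) (n (i + 1)) * Ξ t' (i + 1) +
          (1 - ε (i + 1) (n (i + 1))) * Ξ t' (i + 1 - 1) ∈
          {x : ℝ | ∃ m : ℝ, nmin (i + 1) ≤ m ∧ m ≤ (t - Tmin (i + 1 - 1)) / Tb ∧
            x = ε (i + 1) m * Ξ (t - m * Tb - Tl) (i + 1) +
              (1 - ε (i + 1) m) * Ξ (t - m * Tb - Tl) (i + 1 - 1)} := by
        refine ⟨n (i + 1), hni, ?_, rfl⟩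
        simp only [Nat.add_sub_cancel]
        rw [le_div_iff₀ hTb]
        simp only [ht'] at hTmi
        linarith
      have hbdd : BddAbove {x : ℝ | ∃ m : ℝ, nmin (i + 1) ≤ m ∧
          m ≤ (t - Tmin (i + 1 - 1)) / Tb ∧
          x = ε (i + 1) m * Ξ (t - m * Tb - Tl) (i + 1) +
            (1 - ε (i + 1) m) * Ξ (t - m * Tb - Tl) (i + 1 - 1)} := by
        refine ⟨1, ?_⟩
        rintro x ⟨m, hm1, hm2, rfl⟩
        have hmpos : 0 < m := lt_of_lt_of_le hnm hm1
        have hε := hrange (i + 1) hi1 hiI m hmpos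
        have h1 := hA (i + 1) hiI (t - m * Tb - Tl)
        have h2 := hA i hiI' (t - m * Tb - Tl)
        simp only [Nat.add_sub_cancel]
        nlinarith [h1.2, h2.2, hε.1.le, hε.2.le, h1.1, h2.1]
      refine le_trans ?_ (le_csSup hbdd hmem)
      have hε := hrange (i + 1) hi1 hiI (n (i + 1)) (lt_of_lt_of_le hnm hni)
      have hΞt' := hA (i + 1) hiI t'
      have hprev := ih hiI' t' ht'ge
      have hprod01 : (0:ℝ) ≤ ∏ j ∈ Finset.Icc 1 i, (1 - ε j (n j)) ∧
          (∏ j ∈ Finset.Icc 1 i, (1 - ε j (n j))) ≤ 1 := by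
        constructor
        · apply Finset.prod_nonneg
          intro j hj
          simp only [Finset.mem_Icc] at hj
          have := (hrange j hj.1 (le_trans hj.2 hiI') (n j)
            (lt_of_lt_of_le (hnmin j hj.1 (le_trans hj.2 hiI')) (hn j hj.1 (le_trans hj.2 hiI')))).2
          linarith
        · apply Finset.prod_le_one
          · intro j hj
            simp only [Finset.mem_Icc] at hj
            have := (hrange j hj.1 (le_trans hj.2 hiI') (n j)
              (lt_of_lt_of_le (hnmin j hj.1 (le_trans hj.2 hiI')) (hn j hj.1 (le_trans hj.2 hiI')))).2
            linarith
          · intro j hj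
            simp only [Finset.mem_Icc] at hj
            have := (hrange j hj.1 (le_trans hj.2 hiI') (n j)
              (lt_of_lt_of_le (hnmin j hj.1 (le_trans hj.2 hiI')) (hn j hj.1 (le_trans hj.2 hiI')))).1
            linarith
      rw [hpsplit]
      simp only [Nat.add_sub_cancel]
      nlinarith [hΞt'.1, hε.1.le, hε.2.le, hprod01.1, hprod01.2, hprev,
        hA i hiI' t' |>.1, hA i hiI' t' |>.2]
  exact hB I le_rfl Tmax hbudget
end
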